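/- arXiv:2602.03234 — 6 statements merged into one kernel-verified Lean document; each statement's English description precedes it below -/
import Mathlib

section
/- Let K = Matrix.fromBlocks A B C D with A : Matrix (Fin n) (Fin n) ℂ, D : Matrix (Fin m) (Fin m) ℂ, B : Matrix (Fin n) (Fin m) ℂ, C : Matrix (Fin m) (Fin n) ℂ, where n, m ≥ 1. Suppose λ ∈ ℂ is an eigenvalue of K (i.e., λ ∈ spectrum ℂ K) with λ ∉ spectrum ℂ A and λ ∉ spectrum ℂ D. Then 1 ≤ ‖(λ•1 − A)⁻¹‖ · ‖B‖ · ‖(λ•1 − D)⁻¹‖ · ‖C‖, where ‖·‖ denotes the ℓ²-operator norm of a matrix (the operator norm of the induced linear map between Euclidean spaces). (Two-block Feingold–Varga eigenvalue inclusion: if (x,y) is an eigenvector then x = (λ−A)⁻¹By and y = (λ−D)⁻¹Cx, so the product of the four norms is at least 1.) -/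
/-- The ℓ²-operator norm of a (rectangular) complex matrix: the operator norm of
the induced linear map between Euclidean spaces. -/
noncomputable def l2OpNorm {m n : Type*} [Fintype m] [Fintype n] [DecidableEq n]
    (M : Matrix m n ℂ) : ℝ :=
  ‖LinearMap.toContinuousLinearMap (Matrix.toEuclideanLin M)‖

/-!
If `(x, y)` is an eigenvector of `fromBlocks A B C D` for `λ`, then `(λ - A) x = B y` and
`(λ - D) y = C x`. When `λ - A` and `λ - D` are invertible, `x` is a fixed vector of
`(λ - A)⁻¹ B (λ - D)⁻¹ C`, and `x ≠ 0` (otherwise `y = 0` as well). Hence `1` is an eigenvalue of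
this product, so its operator norm is at least `1`, and submultiplicativity gives the bound.
-/

open scoped Matrix.Norms.L2Operator

lemma l2OpNorm_eq_norm {m n : Type*} [Fintype m] [Fintype n] [DecidableEq n]
    (M : Matrix m n ℂ) : l2OpNorm M = ‖M‖ := rfl

namespace Matrix

variable {l m n : Type*} [Fintype l] [Fintype m] [Fintype n]

lemma norm_le_l2_opNorm_of_mulVec_eq_smul {𝕜 : Type*} [RCLike 𝕜] [DecidableEq n]
    {M : Matrix n n 𝕜} {μ : 𝕜} {x : n → 𝕜} (hx : x ≠ 0) (hMx : M *ᵥ x = μ • x) :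
    ‖μ‖ ≤ ‖M‖ := by
  have hpos : 0 < ‖WithLp.toLp 2 x‖ := by simpa using hx
  have := M.l2_opNorm_mulVec (WithLp.toLp 2 x)
  rw [hMx, map_smul, norm_smul] at this
  exact le_of_mul_le_mul_right this hpos

lemma exists_mulVec_eq_smul_of_mem_spectrum {K : Type*} [Field K] [DecidableEq n]
    {M : Matrix n n K} {μ : K} (h : μ ∈ spectrum K M) : ∃ v ≠ 0, M *ᵥ v = μ • v := by
  rw [← spectrum_toLin', ← Module.End.hasEigenvalue_iff_mem_spectrum] at h
  obtain ⟨v, hv⟩ := h.exists_hasEigenvector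
  exact ⟨v, hv.2, Module.End.mem_eigenspace_iff.mp hv.1⟩

lemma isUnit_smul_one_sub_of_notMem_spectrum {R : Type*} [CommRing R] [DecidableEq n]
    {M : Matrix n n R} {μ : R} (h : μ ∉ spectrum R M) : IsUnit (μ • 1 - M) := by
  rwa [spectrum.notMem_iff, Algebra.algebraMap_eq_smul_one] at h

lemma fromBlocks_mulVec_eq_smul_iff {R : Type*} [CommRing R] [DecidableEq l] [DecidableEq m]
    (A : Matrix l l R) (B : Matrix l m R) (C : Matrix m l R) (D : Matrix m m R) (μ : R)
    (x : l → R) (y : m → R) :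
    fromBlocks A B C D *ᵥ Sum.elim x y = μ • Sum.elim x y ↔
      (μ • 1 - A) *ᵥ x = B *ᵥ y ∧ (μ • 1 - D) *ᵥ y = C *ᵥ x := by
  rw [fromBlocks_mulVec, Sum.elim_comp_inl, Sum.elim_comp_inr,
    ← Sum.elim_comp_inl_inr (μ • Sum.elim x y), Sum.elim_eq_iff]
  simp only [sub_mulVec, smul_mulVec, one_mulVec, sub_eq_iff_eq_add']
  exact and_congr eq_comm (by rw [add_comm]; exact eq_comm)

end Matrix

open Matrix in
theorem feingold_varga_two_block_general {n m : ℕ}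
    (A : Matrix (Fin n) (Fin n) ℂ) (B : Matrix (Fin n) (Fin m) ℂ)
    (C : Matrix (Fin m) (Fin n) ℂ) (D : Matrix (Fin m) (Fin m) ℂ)
    (lam : ℂ) (hK : lam ∈ spectrum ℂ (Matrix.fromBlocks A B C D))
    (hA : lam ∉ spectrum ℂ A) (hD : lam ∉ spectrum ℂ D) :
    1 ≤ l2OpNorm (lam • (1 : Matrix (Fin n) (Fin n) ℂ) - A)⁻¹ * l2OpNorm B *
        l2OpNorm (lam • (1 : Matrix (Fin m) (Fin m) ℂ) - D)⁻¹ * l2OpNorm C := by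
  obtain ⟨v, hv0, hKv⟩ := exists_mulVec_eq_smul_of_mem_spectrum hK
  rw [← Sum.elim_comp_inl_inr v] at hv0 hKv
  set x := v ∘ Sum.inl
  set y := v ∘ Sum.inr
  obtain ⟨hAv, hDv⟩ := (fromBlocks_mulVec_eq_smul_iff A B C D lam x y).mp hKv
  have := (isUnit_smul_one_sub_of_notMem_spectrum hA).invertible
  have := (isUnit_smul_one_sub_of_notMem_spectrum hD).invertible
  set P := (lam • (1 : Matrix (Fin n) (Fin n) ℂ) - A)⁻¹
  set Q := (lam • (1 : Matrix (Fin m) (Fin m) ℂ) - D)⁻¹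
  have hx : P *ᵥ B *ᵥ y = x := inv_mulVec_eq_vec hAv.symm
  have hy : Q *ᵥ C *ᵥ x = y := inv_mulVec_eq_vec hDv.symm
  have hx0 : x ≠ 0 := by
    intro hx0
    have hy0 : y = 0 := by rw [← hy, hx0, mulVec_zero, mulVec_zero]
    exact hv0 (by rw [hx0, hy0, Sum.elim_zero_zero])
  have hcycle : (P * B * Q * C) *ᵥ x = (1 : ℂ) • x := by
    simp only [← mulVec_mulVec, hy, hx, one_smul]
  simp only [l2OpNorm_eq_norm]
  calc (1 : ℝ) = ‖(1 : ℂ)‖ := norm_one.symm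
    _ ≤ ‖P * B * Q * C‖ := norm_le_l2_opNorm_of_mulVec_eq_smul hx0 hcycle
    _ ≤ ‖P * B * Q‖ * ‖C‖ := l2_opNorm_mul _ _
    _ ≤ ‖P * B‖ * ‖Q‖ * ‖C‖ := by gcongr; exact l2_opNorm_mul _ _
    _ ≤ ‖P‖ * ‖B‖ * ‖Q‖ * ‖C‖ := by gcongr; exact l2_opNorm_mul _ _

/-- **Two-block Feingold–Varga eigenvalue inclusion.**  If `λ` is an eigenvalue of the
block matrix `K = fromBlocks A B C D` which is an eigenvalue of neither `A` nor `D`,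
then `1 ≤ ‖(λ−A)⁻¹‖·‖B‖·‖(λ−D)⁻¹‖·‖C‖` in the ℓ²-operator norm. -/
theorem feingold_varga_two_block {n m : ℕ} (hn : 1 ≤ n) (hm : 1 ≤ m)
    (A : Matrix (Fin n) (Fin n) ℂ) (B : Matrix (Fin n) (Fin m) ℂ)
    (C : Matrix (Fin m) (Fin n) ℂ) (D : Matrix (Fin m) (Fin m) ℂ)
    (lam : ℂ) (hK : lam ∈ spectrum ℂ (Matrix.fromBlocks A B C D))
    (hA : lam ∉ spectrum ℂ A) (hD : lam ∉ spectrum ℂ D) :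
    1 ≤ l2OpNorm (lam • (1 : Matrix (Fin n) (Fin n) ℂ) - A)⁻¹ * l2OpNorm B *
        l2OpNorm (lam • (1 : Matrix (Fin m) (Fin m) ℂ) - D)⁻¹ * l2OpNorm C :=
  feingold_varga_two_block_general A B C D lam hK hA hD
end

section
/- Let K = Matrix.fromBlocks A B C D with A : Matrix (Fin n) (Fin n) ℂ, D : Matrix (Fin m) (Fin m) ℂ, B : Matrix (Fin n) (Fin m) ℂ, C : Matrix (Fin m) (Fin n) ℂ, where n, m ≥ 1, and suppose A and D are normal (IsStarNormal, i.e., Aᴴ*A = A*Aᴴ and Dᴴ*D = D*Dᴴ). Then every eigenvalue λ ∈ spectrum ℂ K satisfies Metric.infDist λ (spectrum ℂ A) · Metric.infDist λ (spectrum ℂ D) ≤ ‖B‖ · ‖C‖, where ‖·‖ is the ℓ²-operator norm. (Block Gershgorin / Feingold–Varga inclusion for normal diagonal blocks, using that for a normal matrix M the resolvent norm satisfies ‖(λ−M)⁻¹‖ = 1/dist(λ, spectrum M).) -/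
open Matrix WithLp Metric

lemma IsStarNormal.norm_resolvent_le {A : Type*} [CStarAlgebra A] {a : A} [IsStarNormal a]
    {z : ℂ} (hd : 0 < infDist z (spectrum ℂ a)) :
    ‖resolvent a z‖ ≤ (infDist z (spectrum ℂ a))⁻¹ := by
  have hne : ∀ x ∈ spectrum ℂ a, z - x ≠ 0 := fun x hx h =>
    hd.ne' (infDist_zero_of_mem (sub_eq_zero.mp h ▸ hx))
  have hcfc : resolvent a z = cfc (fun x => (z - x)⁻¹) a := by
    rw [cfc_inv _ a hne, cfc_sub .., cfc_const z a, cfc_id' ℂ a, resolvent]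
  rw [hcfc]
  refine norm_cfc_le (inv_nonneg.mpr hd.le) fun x hx => ?_
  rw [norm_inv, ← dist_eq_norm]
  exact inv_anti₀ hd (infDist_le_dist_of_mem hx)

lemma ContinuousLinearMap.infDist_spectrum_mul_norm_le {E : Type*} [NormedAddCommGroup E]
    [InnerProductSpace ℂ E] [CompleteSpace E] (T : E →L[ℂ] E) [IsStarNormal T] (z : ℂ) (v : E) :
    infDist z (spectrum ℂ T) * ‖v‖ ≤ ‖z • v - T v‖ := by
  obtain hd | hd := (infDist_nonneg (x := z) (s := spectrum ℂ T)).eq_or_lt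
  · rw [← hd, zero_mul]
    exact norm_nonneg _
  have hunit : IsUnit (algebraMap ℂ _ z - T) := spectrum.notMem_iff.mp fun hz =>
    hd.ne' (infDist_zero_of_mem hz)
  have hv : resolvent T z (z • v - T v) = v := by
    simpa [resolvent] using congr($(Ring.inverse_mul_cancel _ hunit) v)
  calc infDist z (spectrum ℂ T) * ‖v‖
      ≤ infDist z (spectrum ℂ T) * (‖resolvent T z‖ * ‖z • v - T v‖) := by
        grw [← le_opNorm, hv]
    _ ≤ ‖z • v - T v‖ := by
        grw [IsStarNormal.norm_resolvent_le hd, mul_inv_cancel_left₀ hd.ne']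

lemma Matrix.infDist_spectrum_mul_norm_le {ι : Type*} [Fintype ι] [DecidableEq ι]
    (M : Matrix ι ι ℂ) [IsStarNormal M] (z : ℂ) (v : ι → ℂ) :
    infDist z (spectrum ℂ M) * ‖toLp 2 v‖ ≤ ‖toLp 2 (z • v - M *ᵥ v)‖ := by
  have := (toEuclideanCLM (𝕜 := ℂ) M).infDist_spectrum_mul_norm_le z (toLp 2 v)
  rwa [AlgEquiv.spectrum_eq, ← toLp_smul, toEuclideanCLM_toLp, ← toLp_sub] at this

lemma Matrix.norm_toLp_mulVec_le_l2OpNorm {m n : Type*} [Fintype m] [Fintype n] [DecidableEq n]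
    (M : Matrix m n ℂ) (v : n → ℂ) : ‖toLp 2 (M *ᵥ v)‖ ≤ l2OpNorm M * ‖toLp 2 v‖ :=
  (LinearMap.toContinuousLinearMap (toEuclideanLin M)).le_opNorm (toLp 2 v)

lemma Matrix.exists_fromBlocks_eigenvector {K n m : Type*} [Field K] [Fintype n] [Fintype m]
    [DecidableEq n] [DecidableEq m] {A : Matrix n n K} {B : Matrix n m K} {C : Matrix m n K}
    {D : Matrix m m K} {lam : K} (h : lam ∈ spectrum K (fromBlocks A B C D)) :
    ∃ x y, (x ≠ 0 ∨ y ≠ 0) ∧ A *ᵥ x + B *ᵥ y = lam • x ∧ C *ᵥ x + D *ᵥ y = lam • y := by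
  rw [← spectrum_toLin', ← Module.End.hasEigenvalue_iff_mem_spectrum] at h
  obtain ⟨v, hv⟩ := h.exists_hasEigenvector
  have hKv : fromBlocks A B C D *ᵥ v = lam • v := by
    simpa using hv.apply_eq_smul
  rw [fromBlocks_mulVec] at hKv
  refine ⟨v ∘ Sum.inl, v ∘ Sum.inr, ?_, funext fun i => ?_, funext fun i => ?_⟩
  · by_contra! h0
    exact hv.2 (funext (Sum.rec (congrFun h0.1) (congrFun h0.2)))
  · simpa using congrFun hKv (Sum.inl i)
  · simpa using congrFun hKv (Sum.inr i)

lemma mul_le_mul_of_le_mul_of_le_mul {a b p q s t : ℝ} (ha : 0 ≤ a) (hb : 0 ≤ b) (hp : 0 ≤ p)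
    (hq : 0 ≤ q) (hs : 0 ≤ s) (ht : 0 ≤ t) (hst : s ≠ 0 ∨ t ≠ 0)
    (h₁ : a * s ≤ p * t) (h₂ : b * t ≤ q * s) : a * b ≤ p * q := by
  rcases hs.eq_or_lt with rfl | hs
  · have ht : 0 < t := ht.lt_of_ne' (hst.resolve_left (by simp))
    have : b = 0 := by nlinarith
    simp [this, mul_nonneg hp hq]
  rcases ht.eq_or_lt with rfl | ht
  · have : a = 0 := by nlinarith
    simp [this, mul_nonneg hp hq]
  have := mul_le_mul h₁ h₂ (by positivity) (by positivity)
  nlinarith [mul_pos hs ht]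

theorem feingold_varga_normal_blocks_general {n m : ℕ}
    (A : Matrix (Fin n) (Fin n) ℂ) (B : Matrix (Fin n) (Fin m) ℂ)
    (C : Matrix (Fin m) (Fin n) ℂ) (D : Matrix (Fin m) (Fin m) ℂ)
    (hA : IsStarNormal A) (hD : IsStarNormal D)
    (lam : ℂ) (hK : lam ∈ spectrum ℂ (Matrix.fromBlocks A B C D)) :
    Metric.infDist lam (spectrum ℂ A) * Metric.infDist lam (spectrum ℂ D) ≤
      l2OpNorm B * l2OpNorm C := by
  obtain ⟨x, y, hxy, hx, hy⟩ := exists_fromBlocks_eigenvector hK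
  have hAx : infDist lam (spectrum ℂ A) * ‖toLp 2 x‖ ≤ l2OpNorm B * ‖toLp 2 y‖ := by
    grw [A.infDist_spectrum_mul_norm_le, ← hx, add_sub_cancel_left, norm_toLp_mulVec_le_l2OpNorm]
  have hDy : infDist lam (spectrum ℂ D) * ‖toLp 2 y‖ ≤ l2OpNorm C * ‖toLp 2 x‖ := by
    grw [D.infDist_spectrum_mul_norm_le, ← hy, add_sub_cancel_right, norm_toLp_mulVec_le_l2OpNorm]
  exact mul_le_mul_of_le_mul_of_le_mul infDist_nonneg infDist_nonneg (norm_nonneg _)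
    (norm_nonneg _) (norm_nonneg _) (norm_nonneg _) (by simpa using hxy) hAx hDy

/-- **Block Gershgorin / Feingold–Varga inclusion for normal diagonal blocks.**
If `A` and `D` are normal, then every eigenvalue `λ` of `K = fromBlocks A B C D`
satisfies `dist(λ, spec A) · dist(λ, spec D) ≤ ‖B‖·‖C‖` in the ℓ²-operator norm. -/
theorem feingold_varga_normal_blocks {n m : ℕ} (hn : 1 ≤ n) (hm : 1 ≤ m)
    (A : Matrix (Fin n) (Fin n) ℂ) (B : Matrix (Fin n) (Fin m) ℂ)
    (C : Matrix (Fin m) (Fin n) ℂ) (D : Matrix (Fin m) (Fin m) ℂ)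
    (hA : IsStarNormal A) (hD : IsStarNormal D)
    (lam : ℂ) (hK : lam ∈ spectrum ℂ (Matrix.fromBlocks A B C D)) :
    Metric.infDist lam (spectrum ℂ A) * Metric.infDist lam (spectrum ℂ D) ≤
      l2OpNorm B * l2OpNorm C :=
  feingold_varga_normal_blocks_general A B C D hA hD lam hK
end

section
/- Let K = Matrix.fromBlocks 0 B C D, where the upper-left block is the n×n zero matrix, D : Matrix (Fin m) (Fin m) ℂ is normal (IsStarNormal), B : Matrix (Fin n) (Fin m) ℂ and C : Matrix (Fin m) (Fin n) ℂ, with n, m ≥ 1. Let ρ(D) := the maximum of |μ| over eigenvalues μ ∈ spectrum ℂ D. Then every eigenvalue λ ∈ spectrum ℂ K satisfies |λ| ≤ ρ(D) + Real.sqrt (‖B‖ · ‖C‖), where ‖·‖ is the ℓ²-operator norm. (This is the spectral-radius bound of the paper's Appendix D, stated with the hypotheses — zero upper-left block and normal D — under which the block-Gershgorin proof is valid.) -/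
open Matrix WithLp
open scoped Matrix.Norms.L2Operator

theorem l2OpNorm_nonneg {m n : Type*} [Fintype m] [Fintype n] [DecidableEq n]
    (M : Matrix m n ℂ) : 0 ≤ l2OpNorm M :=
  norm_nonneg _

theorem norm_toLp_mulVec_le {m n : Type*} [Fintype m] [Fintype n] [DecidableEq n]
    (M : Matrix m n ℂ) (x : n → ℂ) : ‖toLp 2 (M *ᵥ x)‖ ≤ l2OpNorm M * ‖toLp 2 x‖ :=
  l2_opNorm_mulVec M (toLp 2 x)

instance isStarNormal_algebraMap {R A : Type*} [CommSemiring R] [Semiring A] [Star A]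
    [Algebra R A] (z : R) : IsStarNormal (algebraMap R A z) :=
  ⟨Algebra.commute_algebraMap_right z _⟩

instance isStarNormal_algebraMap_sub {R A : Type*} [CommRing R] [Ring A] [StarRing A]
    [Algebra R A] (z : R) (a : A) [IsStarNormal a] : IsStarNormal (algebraMap R A z - a) :=
  (Algebra.commute_algebraMap_left z (star a)).isStarNormal_sub

theorem IsStarNormal.norm_inv_le {A : Type*} [CStarAlgebra A] (u : Aˣ) [IsStarNormal (u : A)]
    {δ : ℝ} (hδ : 0 < δ) (h : ∀ μ ∈ spectrum ℂ (u : A), δ ≤ ‖μ‖) : ‖(↑u⁻¹ : A)‖ ≤ δ⁻¹ := by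
  have hρ : spectralRadius ℂ (↑u⁻¹ : A) ≤ ENNReal.ofReal δ⁻¹ := by
    refine iSup₂_le fun z hz => ?_
    rw [← spectrum.map_inv] at hz
    have hz' : δ ≤ ‖z‖⁻¹ := norm_inv z ▸ h z⁻¹ hz
    rw [← enorm_eq_nnnorm, ← ofReal_norm]
    exact ENNReal.ofReal_le_ofReal ((le_inv_comm₀ hδ (inv_pos.mp (hδ.trans_le hz'))).mp hz')
  rwa [IsStarNormal.spectralRadius_eq_nnnorm, ← enorm_eq_nnnorm, ← ofReal_norm,
    ENNReal.ofReal_le_ofReal_iff (by positivity)] at hρ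

theorem spectrum.sub_le_norm_of_mem_algebraMap_sub {𝕜 A : Type*} [NormedField 𝕜] [Ring A]
    [Algebra 𝕜 A] {a : A} {ρ : ℝ} (ha : ∀ ν ∈ spectrum 𝕜 a, ‖ν‖ ≤ ρ) (z : 𝕜) :
    ∀ μ ∈ spectrum 𝕜 (algebraMap 𝕜 A z - a), ‖z‖ - ρ ≤ ‖μ‖ := by
  rw [← spectrum.singleton_sub_eq, Set.singleton_sub]
  rintro _ ⟨ν, hν, rfl⟩
  linarith [norm_sub_norm_le z ν, ha ν hν]

theorem Matrix.mul_norm_le_norm_toLp_mulVec {ι : Type*} [Fintype ι] [DecidableEq ι]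
    {M : Matrix ι ι ℂ} [IsStarNormal M] {δ : ℝ} (hδ : 0 < δ)
    (h : ∀ μ ∈ spectrum ℂ M, δ ≤ ‖μ‖) (x : ι → ℂ) :
    δ * ‖toLp 2 x‖ ≤ ‖toLp 2 (M *ᵥ x)‖ := by
  obtain ⟨u, rfl⟩ : IsUnit M := (spectrum.zero_notMem_iff ℂ).mp fun h0 => by
    simpa [hδ.not_ge] using h 0 h0
  have hx : x = (↑u⁻¹ : Matrix ι ι ℂ) *ᵥ ((u : Matrix ι ι ℂ) *ᵥ x) := by
    rw [mulVec_mulVec, Units.inv_mul, one_mulVec]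
  calc δ * ‖toLp 2 x‖
      ≤ δ * (‖(↑u⁻¹ : Matrix ι ι ℂ)‖ * ‖toLp 2 ((u : Matrix ι ι ℂ) *ᵥ x)‖) := by
        gcongr
        conv_lhs => rw [hx]
        exact l2_opNorm_mulVec _ (toLp 2 _)
    _ ≤ δ * (δ⁻¹ * ‖toLp 2 ((u : Matrix ι ι ℂ) *ᵥ x)‖) := by
        gcongr
        exact IsStarNormal.norm_inv_le u hδ h
    _ = ‖toLp 2 ((u : Matrix ι ι ℂ) *ᵥ x)‖ := by field_simp

theorem Matrix.exists_eigenvector_fromBlocks {K l m : Type*} [Field K] [Fintype l] [Fintype m]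
    [DecidableEq l] [DecidableEq m] {A : Matrix l l K} {B : Matrix l m K} {C : Matrix m l K}
    {D : Matrix m m K} {lam : K} (h : lam ∈ spectrum K (fromBlocks A B C D)) :
    ∃ x y, (x ≠ 0 ∨ y ≠ 0) ∧ A *ᵥ x + B *ᵥ y = lam • x ∧ C *ᵥ x + D *ᵥ y = lam • y := by
  rw [← spectrum_toLin', ← Module.End.hasEigenvalue_iff_mem_spectrum] at h
  obtain ⟨v, hv⟩ := h.exists_hasEigenvector
  have hKv : fromBlocks A B C D *ᵥ v = lam • v := hv.apply_eq_smul
  rw [fromBlocks_mulVec] at hKv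
  refine ⟨v ∘ Sum.inl, v ∘ Sum.inr, ?_, congr($hKv ∘ Sum.inl), congr($hKv ∘ Sum.inr)⟩
  by_contra! h0
  exact hv.2 (by rw [← Sum.elim_comp_inl_inr v, h0.1, h0.2, Sum.elim_zero_zero])

theorem le_sqrt_mul_of_cross_bounds {a δ b c u w : ℝ} (hδ : 0 < δ) (hδa : δ ≤ a) (hb : 0 ≤ b)
    (hu : 0 ≤ u) (huw : 0 < u ∨ 0 < w) (hau : a * u ≤ b * w) (hδw : δ * w ≤ c * u) :
    δ ≤ Real.sqrt (b * c) := by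
  have hu_pos : 0 < u := by
    rcases huw with hu_pos | hw
    · exact hu_pos
    · by_contra! hu_nonpos
      obtain rfl : u = 0 := le_antisymm hu_nonpos hu
      linarith [mul_pos hδ hw, mul_zero c]
  have haδ : a * δ ≤ b * c := by
    refine le_of_mul_le_mul_right ?_ hu_pos
    nlinarith [mul_le_mul_of_nonneg_left hau hδ.le, mul_le_mul_of_nonneg_left hδw hb]
  exact Real.le_sqrt_of_sq_le (by nlinarith)

theorem specRadius_fromBlocks_zero_general {n m : ℕ}
    (B : Matrix (Fin n) (Fin m) ℂ) (C : Matrix (Fin m) (Fin n) ℂ)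
    (D : Matrix (Fin m) (Fin m) ℂ) (hD : IsStarNormal D)
    (ρD : ℝ) (hρD : IsGreatest ((fun z : ℂ => ‖z‖) '' spectrum ℂ D) ρD)
    (lam : ℂ)
    (hK : lam ∈ spectrum ℂ (Matrix.fromBlocks (0 : Matrix (Fin n) (Fin n) ℂ) B C D)) :
    ‖lam‖ ≤ ρD + Real.sqrt (l2OpNorm B * l2OpNorm C) := by
  obtain ⟨μ₀, -, hμ₀⟩ := hρD.1
  rcases le_or_gt ‖lam‖ ρD with hle | hlt
  · linarith [Real.sqrt_nonneg (l2OpNorm B * l2OpNorm C)]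
  set δ := ‖lam‖ - ρD with hδ_def
  have hδ : 0 < δ := sub_pos.mpr hlt
  obtain ⟨x, y, hxy, hB, hC⟩ := exists_eigenvector_fromBlocks hK
  rw [zero_mulVec, zero_add] at hB
  have hsep : ∀ μ ∈ spectrum ℂ (algebraMap ℂ _ lam - D), δ ≤ ‖μ‖ :=
    spectrum.sub_le_norm_of_mem_algebraMap_sub (fun ν hν => hρD.2 ⟨ν, hν, rfl⟩) lam
  have hx : ‖lam‖ * ‖toLp 2 x‖ ≤ l2OpNorm B * ‖toLp 2 y‖ := by
    simpa [hB, norm_smul] using norm_toLp_mulVec_le B y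
  have hy : δ * ‖toLp 2 y‖ ≤ l2OpNorm C * ‖toLp 2 x‖ :=
    calc δ * ‖toLp 2 y‖ ≤ ‖toLp 2 ((algebraMap ℂ _ lam - D) *ᵥ y)‖ :=
          mul_norm_le_norm_toLp_mulVec hδ hsep y
      _ = ‖toLp 2 (C *ᵥ x)‖ := by
          rw [sub_mulVec, Algebra.algebraMap_eq_smul_one, smul_mulVec, one_mulVec, ← hC,
            add_sub_cancel_right]
      _ ≤ l2OpNorm C * ‖toLp 2 x‖ := norm_toLp_mulVec_le C x
  have hxy_pos : 0 < ‖toLp 2 x‖ ∨ 0 < ‖toLp 2 y‖ := by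
    simpa only [norm_pos_iff, ne_eq, toLp_eq_zero] using hxy
  have hδ_le := le_sqrt_mul_of_cross_bounds hδ (by linarith [norm_nonneg μ₀])
    (l2OpNorm_nonneg B) (norm_nonneg _) hxy_pos hx hy
  linarith

/-- **Spectral-radius bound of Appendix D.**  For a block matrix
`K = fromBlocks 0 B C D` with zero upper-left block and normal `D`, letting
`ρD` be the maximum modulus of the eigenvalues of `D`, every eigenvalue `λ`
of `K` satisfies `|λ| ≤ ρD + √(‖B‖·‖C‖)` in the ℓ²-operator norm. -/
theorem specRadius_fromBlocks_zero {n m : ℕ} (hn : 1 ≤ n) (hm : 1 ≤ m)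
    (B : Matrix (Fin n) (Fin m) ℂ) (C : Matrix (Fin m) (Fin n) ℂ)
    (D : Matrix (Fin m) (Fin m) ℂ) (hD : IsStarNormal D)
    (ρD : ℝ) (hρD : IsGreatest ((fun z : ℂ => ‖z‖) '' spectrum ℂ D) ρD)
    (lam : ℂ)
    (hK : lam ∈ spectrum ℂ (Matrix.fromBlocks (0 : Matrix (Fin n) (Fin n) ℂ) B C D)) :
    ‖lam‖ ≤ ρD + Real.sqrt (l2OpNorm B * l2OpNorm C) :=
  specRadius_fromBlocks_zero_general B C D hD ρD hρD lam hK
end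

section
/- Let n be a nonempty finite type, M : Matrix n n ℂ, i : n, L ≥ 1 a natural number, and c : ℂ. Suppose that for every m : ℕ, the diagonal entry satisfies (M ^ (m * L)) i i = c ^ m. Then the spectral radius of M is at least |c|^(1/L). (Gelfand-formula lower bound: since |(M^n) i i| ≤ ‖M^n‖ for a submultiplicative matrix norm and ρ(M) = lim ‖M^n‖^{1/n}, coherent accumulation of a return amplitude along a length-L cycle forces ρ(M) ≥ |Tr[P M^L P]|^{1/L}. This is Eq. (spec_low_bound) of the paper, used to convert return cycles of the truncated Floquet channel into upper bounds on the Liouvillian gap.) -/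
open scoped NNReal ENNReal Matrix.Norms.Operator
open Filter

/-! Every entry of a matrix is bounded by its `ℓ∞` operator norm, so the return amplitudes give
`‖c‖ ^ m ≤ ‖M ^ (m * L)‖`. Taking `(m * L)`-th roots and letting `m → ∞`, Gelfand's formula
yields `‖c‖ ^ (1 / L) ≤ ρ(M)`; finally `ρ(M)` is the largest modulus in the (compact) spectrum. -/

noncomputable def specRad {n : Type*} [Fintype n] [DecidableEq n]
    (M : Matrix n n ℂ) : ℝ :=
  sSup ((fun z : ℂ => ‖z‖) '' spectrum ℂ M)

theorem Matrix.nnnorm_entry_le_linfty_opNNNorm {m n α : Type*} [Fintype m] [Fintype n]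
    [SeminormedAddCommGroup α] (A : Matrix m n α) (i : m) (j : n) : ‖A i j‖₊ ≤ ‖A‖₊ := by
  rw [Matrix.linfty_opNNNorm_def]
  calc ‖A i j‖₊ ≤ ∑ k, ‖A i k‖₊ :=
        Finset.single_le_sum (f := fun k => ‖A i k‖₊) (fun _ _ => zero_le) (Finset.mem_univ j)
    _ ≤ _ := Finset.le_sup (f := fun i => ∑ k, ‖A i k‖₊) (Finset.mem_univ i)

theorem spectrum.rpow_le_spectralRadius_of_pow_le_nnnorm_pow_mul {A : Type*} [NormedRing A]
    [NormedAlgebra ℂ A] [CompleteSpace A] (a : A) {L : ℕ} (hL : L ≠ 0) {r : ℝ≥0}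
    (h : ∀ m : ℕ, r ^ m ≤ ‖a ^ (m * L)‖₊) :
    (r : ℝ≥0∞) ^ (1 / L : ℝ) ≤ spectralRadius ℂ a := by
  have hmul : Tendsto (fun m : ℕ => m * L) atTop atTop :=
    tendsto_id.atTop_mul_const' (Nat.pos_of_ne_zero hL)
  refine ge_of_tendsto ((pow_nnnorm_pow_one_div_tendsto_nhds_spectralRadius a).comp hmul) ?_
  filter_upwards [eventually_ne_atTop 0] with m hm
  calc (r : ℝ≥0∞) ^ (1 / L : ℝ) = ((r : ℝ≥0∞) ^ m) ^ (1 / (m * L : ℕ) : ℝ) := by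
        rw [← ENNReal.rpow_natCast, ← ENNReal.rpow_mul]
        congr 1
        push_cast
        field_simp
    _ ≤ (‖a ^ (m * L)‖₊ : ℝ≥0∞) ^ (1 / (m * L : ℕ) : ℝ) :=
        ENNReal.rpow_le_rpow (by exact_mod_cast h m) (by positivity)

theorem specRad_nonneg {n : Type*} [Fintype n] [DecidableEq n] (M : Matrix n n ℂ) :
    0 ≤ specRad M :=
  Real.sSup_nonneg fun _ ⟨z, _, hz⟩ => hz ▸ norm_nonneg z

theorem spectralRadius_le_ofReal_specRad {n : Type*} [Fintype n] [DecidableEq n]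
    (M : Matrix n n ℂ) : spectralRadius ℂ M ≤ ENNReal.ofReal (specRad M) := by
  have hbdd : BddAbove ((fun z : ℂ => ‖z‖) '' spectrum ℂ M) :=
    ((spectrum.isCompact M).image continuous_norm).bddAbove
  refine iSup₂_le fun z hz => ?_
  rw [← ENNReal.ofReal_coe_nnreal, coe_nnnorm]
  exact ENNReal.ofReal_le_ofReal (le_csSup hbdd ⟨z, hz, rfl⟩)

theorem spectralRadius_ge_of_return_cycle_general {n : Type*} [Fintype n] [DecidableEq n]
    (M : Matrix n n ℂ) (i : n) (L : ℕ) (hL : 1 ≤ L) (c : ℂ)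
    (h : ∀ m : ℕ, (M ^ (m * L)) i i = c ^ m) :
    ‖c‖ ^ ((1 : ℝ) / L) ≤ specRad M := by
  have hgrowth : ∀ m : ℕ, ‖c‖₊ ^ m ≤ ‖M ^ (m * L)‖₊ := fun m => by
    simpa [h m] using (M ^ (m * L)).nnnorm_entry_le_linfty_opNNNorm i i
  have hρ := (spectrum.rpow_le_spectralRadius_of_pow_le_nnnorm_pow_mul M (by omega)
    hgrowth).trans (spectralRadius_le_ofReal_specRad M)
  rwa [← ENNReal.ofReal_coe_nnreal, coe_nnnorm, ENNReal.ofReal_rpow_of_nonneg (norm_nonneg c)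
    (by positivity), ENNReal.ofReal_le_ofReal_iff (specRad_nonneg M)] at hρ

/-- **Gelfand-formula lower bound from a coherent return cycle** (Eq. (14) of the
paper).  If the diagonal entry of `M^{mL}` at `i` equals `c^m` for every `m`,
then the spectral radius of `M` is at least `|c|^{1/L}`. -/
theorem spectralRadius_ge_of_return_cycle {n : Type*} [Fintype n] [DecidableEq n]
    [Nonempty n] (M : Matrix n n ℂ) (i : n) (L : ℕ) (hL : 1 ≤ L) (c : ℂ)
    (h : ∀ m : ℕ, (M ^ (m * L)) i i = c ^ m) :
    ‖c‖ ^ ((1 : ℝ) / L) ≤ specRad M :=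
  spectralRadius_ge_of_return_cycle_general M i L hL c h
end

section
/- Let X = !![0, 1; 1, 0], Y = !![0, −Complex.I; Complex.I, 0], Z = !![1, 0; 0, −1] be the Pauli matrices, H = (Real.sqrt 2)⁻¹ • !![1, 1; 1, −1] the Hadamard gate and S = !![1, 0; 0, Complex.I] the phase gate, all in Matrix (Fin 2) (Fin 2) ℂ. Then for every unitary U : Matrix (Fin 2) (Fin 2) ℂ (Uᴴ * U = 1) there exist real coefficients a : Fin 3 → Fin 3 → ℝ such that for every traceless A : Matrix (Fin 2) (Fin 2) ℂ (Matrix.trace A = 0), writing σ₀ = X, σ₁ = Y, σ₂ = Z: U * A * Uᴴ = ∑ i, ((a 0 i : ℂ) • (σᵢ * A * σᵢ) + (a 1 i : ℂ) • ((H*S*σᵢ) * A * (H*S*σᵢ)ᴴ) + (a 2 i : ℂ) • ((S*H*σᵢ) * A * (S*H*σᵢ)ᴴ)). (Appendix C: every single-qubit unitary conjugation channel, restricted to traceless operators, is a real linear combination of the nine Clifford conjugation maps obtained from the three permutation patterns realized by I, SH, HS, each dressed by a Pauli sign flip.) -/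
open Matrix

namespace SingleQubitCliffordDecomp

/-- Pauli X. -/
def X : Matrix (Fin 2) (Fin 2) ℂ := !![0, 1; 1, 0]
/-- Pauli Y. -/
def Y : Matrix (Fin 2) (Fin 2) ℂ := !![0, -Complex.I; Complex.I, 0]
/-- Pauli Z. -/
def Z : Matrix (Fin 2) (Fin 2) ℂ := !![1, 0; 0, -1]
/-- Hadamard gate. -/
noncomputable def H : Matrix (Fin 2) (Fin 2) ℂ := (Real.sqrt 2)⁻¹ • !![1, 1; 1, -1]
/-- Phase gate. -/
def S : Matrix (Fin 2) (Fin 2) ℂ := !![1, 0; 0, Complex.I]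
/-- The three Pauli matrices, indexed by `Fin 3`. -/
noncomputable def σ : Fin 3 → Matrix (Fin 2) (Fin 2) ℂ := ![X, Y, Z]

/-- Unnormalized Hadamard. -/
def K : Matrix (Fin 2) (Fin 2) ℂ := !![1, 1; 1, -1]

lemma hHK : H = ((Real.sqrt 2 : ℂ))⁻¹ • K := by simp [H, K]

lemma conj_smul (c : ℂ) (hc : (starRingEnd ℂ) c = c) (M A : Matrix (Fin 2) (Fin 2) ℂ) :
    ((c : ℂ) • M) * A * ((c : ℂ) • M)ᴴ = (c * c) • (M * A * Mᴴ) := by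
  simp [Matrix.smul_mul, Matrix.mul_smul, smul_smul, hc]

lemma sqrt2_inv_mul : ((Real.sqrt 2 : ℂ))⁻¹ * ((Real.sqrt 2 : ℂ))⁻¹ = (2 : ℂ)⁻¹ := by
  rw [← mul_inv, ← Complex.ofReal_mul, Real.mul_self_sqrt (by norm_num : (0:ℝ) ≤ 2)]
  norm_num

lemma conjH_of (P A B : Matrix (Fin 2) (Fin 2) ℂ)
    (h : (K * P) * A * (K * P)ᴴ = (2 : ℂ) • B) :
    (H * P) * A * (H * P)ᴴ = B := by
  rw [hHK, Matrix.smul_mul, conj_smul _ (by simp [map_inv₀, Complex.conj_ofReal]),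
    sqrt2_inv_mul, h, smul_smul]
  norm_num

lemma conjSH_of (P A B : Matrix (Fin 2) (Fin 2) ℂ)
    (h : (S * K * P) * A * (S * K * P)ᴴ = (2 : ℂ) • B) :
    (S * H * P) * A * (S * H * P)ᴴ = B := by
  have hSH : S * H * P = ((Real.sqrt 2 : ℂ))⁻¹ • (S * K * P) := by
    rw [hHK, Matrix.mul_smul, Matrix.smul_mul]
  rw [hSH, conj_smul _ (by simp [map_inv₀, Complex.conj_ofReal]),
    sqrt2_inv_mul, h, smul_smul]
  norm_num

/-- Decomposition of a traceless matrix in the Pauli basis (complex coefficients). -/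
lemma traceless_decomp (A : Matrix (Fin 2) (Fin 2) ℂ) (h : Matrix.trace A = 0) :
    A = ((A 0 1 + A 1 0) / 2) • X + (Complex.I * (A 0 1 - A 1 0) / 2) • Y + (A 0 0) • Z := by
  have h11 : A 1 1 = -A 0 0 := by
    have := h
    rw [Matrix.trace_fin_two] at this
    linear_combination this
  ext a b
  fin_cases a <;> fin_cases b <;>
    simp [X, Y, Z, h11, Complex.ext_iff] <;> ring_nf <;>
      simp [Complex.I_sq] <;> ring

/-- Decomposition of a traceless Hermitian matrix with real Pauli coefficients. -/
lemma hermit_decomp (B : Matrix (Fin 2) (Fin 2) ℂ) (htr : Matrix.trace B = 0)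
    (hh : Bᴴ = B) :
    B = (((B 0 1).re : ℝ) : ℂ) • X + ((-(B 0 1).im : ℝ) : ℂ) • Y
        + (((B 0 0).re : ℝ) : ℂ) • Z := by
  have h10 : B 1 0 = (starRingEnd ℂ) (B 0 1) := by
    have := congrFun (congrFun hh 1) 0
    simpa [Matrix.conjTranspose_apply] using this.symm
  have h00 : (B 0 0).im = 0 := by
    have := congrFun (congrFun hh 0) 0
    rw [Matrix.conjTranspose_apply] at this
    have := congrArg Complex.im this
    simp [Complex.conj_im] at this
    linarith
  have h11 : B 1 1 = -B 0 0 := by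
    have := htr
    rw [Matrix.trace_fin_two] at this
    linear_combination this
  ext a b
  fin_cases a <;> fin_cases b <;>
    simp [X, Y, Z, h10, h11, Complex.ext_iff, h00] <;> ring_nf <;> simp [h00]

lemma cP_0_0 : X * X * X = X := by
  ext a b
  fin_cases a <;> fin_cases b <;>
    simp [X, Y, Z, K, S, Matrix.mul_apply, Matrix.conjTranspose_apply, Fin.sum_univ_succ,
      Complex.ext_iff] <;> ring_nf <;> simp [Complex.I_sq]

lemma cHS_0_0 : (H * S * X) * X * (H * S * X)ᴴ = -Y := by
  rw [mul_assoc H S X]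
  refine conjH_of _ _ _ ?_
  rw [← mul_assoc K S X]
  ext a b
  fin_cases a <;> fin_cases b <;>
    simp [X, Y, Z, K, S, Matrix.mul_apply, Matrix.conjTranspose_apply, Fin.sum_univ_succ,
      Complex.ext_iff] <;> ring_nf <;> simp [Complex.I_sq]

lemma cSH_0_0 : (S * H * X) * X * (S * H * X)ᴴ = Z := by
  refine conjSH_of _ _ _ ?_
  ext a b
  fin_cases a <;> fin_cases b <;>
    simp [X, Y, Z, K, S, Matrix.mul_apply, Matrix.conjTranspose_apply, Fin.sum_univ_succ,
      Complex.ext_iff] <;> ring_nf <;> simp [Complex.I_sq]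

lemma cP_0_1 : X * Y * X = -Y := by
  ext a b
  fin_cases a <;> fin_cases b <;>
    simp [X, Y, Z, K, S, Matrix.mul_apply, Matrix.conjTranspose_apply, Fin.sum_univ_succ,
      Complex.ext_iff] <;> ring_nf <;> simp [Complex.I_sq]

lemma cHS_0_1 : (H * S * X) * Y * (H * S * X)ᴴ = Z := by
  rw [mul_assoc H S X]
  refine conjH_of _ _ _ ?_
  rw [← mul_assoc K S X]
  ext a b
  fin_cases a <;> fin_cases b <;>
    simp [X, Y, Z, K, S, Matrix.mul_apply, Matrix.conjTranspose_apply, Fin.sum_univ_succ,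
      Complex.ext_iff] <;> ring_nf <;> simp [Complex.I_sq]

lemma cSH_0_1 : (S * H * X) * Y * (S * H * X)ᴴ = -X := by
  refine conjSH_of _ _ _ ?_
  ext a b
  fin_cases a <;> fin_cases b <;>
    simp [X, Y, Z, K, S, Matrix.mul_apply, Matrix.conjTranspose_apply, Fin.sum_univ_succ,
      Complex.ext_iff] <;> ring_nf <;> simp [Complex.I_sq]

lemma cP_0_2 : X * Z * X = -Z := by
  ext a b
  fin_cases a <;> fin_cases b <;>
    simp [X, Y, Z, K, S, Matrix.mul_apply, Matrix.conjTranspose_apply, Fin.sum_univ_succ,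
      Complex.ext_iff] <;> ring_nf <;> simp [Complex.I_sq]

lemma cHS_0_2 : (H * S * X) * Z * (H * S * X)ᴴ = -X := by
  rw [mul_assoc H S X]
  refine conjH_of _ _ _ ?_
  rw [← mul_assoc K S X]
  ext a b
  fin_cases a <;> fin_cases b <;>
    simp [X, Y, Z, K, S, Matrix.mul_apply, Matrix.conjTranspose_apply, Fin.sum_univ_succ,
      Complex.ext_iff] <;> ring_nf <;> simp [Complex.I_sq]

lemma cSH_0_2 : (S * H * X) * Z * (S * H * X)ᴴ = -Y := by
  refine conjSH_of _ _ _ ?_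
  ext a b
  fin_cases a <;> fin_cases b <;>
    simp [X, Y, Z, K, S, Matrix.mul_apply, Matrix.conjTranspose_apply, Fin.sum_univ_succ,
      Complex.ext_iff] <;> ring_nf <;> simp [Complex.I_sq]

lemma cP_1_0 : Y * X * Y = -X := by
  ext a b
  fin_cases a <;> fin_cases b <;>
    simp [X, Y, Z, K, S, Matrix.mul_apply, Matrix.conjTranspose_apply, Fin.sum_univ_succ,
      Complex.ext_iff] <;> ring_nf <;> simp [Complex.I_sq]

lemma cHS_1_0 : (H * S * Y) * X * (H * S * Y)ᴴ = Y := by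
  rw [mul_assoc H S Y]
  refine conjH_of _ _ _ ?_
  rw [← mul_assoc K S Y]
  ext a b
  fin_cases a <;> fin_cases b <;>
    simp [X, Y, Z, K, S, Matrix.mul_apply, Matrix.conjTranspose_apply, Fin.sum_univ_succ,
      Complex.ext_iff] <;> ring_nf <;> simp [Complex.I_sq]

lemma cSH_1_0 : (S * H * Y) * X * (S * H * Y)ᴴ = -Z := by
  refine conjSH_of _ _ _ ?_
  ext a b
  fin_cases a <;> fin_cases b <;>
    simp [X, Y, Z, K, S, Matrix.mul_apply, Matrix.conjTranspose_apply, Fin.sum_univ_succ,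
      Complex.ext_iff] <;> ring_nf <;> simp [Complex.I_sq]

lemma cP_1_1 : Y * Y * Y = Y := by
  ext a b
  fin_cases a <;> fin_cases b <;>
    simp [X, Y, Z, K, S, Matrix.mul_apply, Matrix.conjTranspose_apply, Fin.sum_univ_succ,
      Complex.ext_iff] <;> ring_nf <;> simp [Complex.I_sq]

lemma cHS_1_1 : (H * S * Y) * Y * (H * S * Y)ᴴ = -Z := by
  rw [mul_assoc H S Y]
  refine conjH_of _ _ _ ?_
  rw [← mul_assoc K S Y]
  ext a b
  fin_cases a <;> fin_cases b <;>
    simp [X, Y, Z, K, S, Matrix.mul_apply, Matrix.conjTranspose_apply, Fin.sum_univ_succ,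
      Complex.ext_iff] <;> ring_nf <;> simp [Complex.I_sq]

lemma cSH_1_1 : (S * H * Y) * Y * (S * H * Y)ᴴ = X := by
  refine conjSH_of _ _ _ ?_
  ext a b
  fin_cases a <;> fin_cases b <;>
    simp [X, Y, Z, K, S, Matrix.mul_apply, Matrix.conjTranspose_apply, Fin.sum_univ_succ,
      Complex.ext_iff] <;> ring_nf <;> simp [Complex.I_sq]

lemma cP_1_2 : Y * Z * Y = -Z := by
  ext a b
  fin_cases a <;> fin_cases b <;>
    simp [X, Y, Z, K, S, Matrix.mul_apply, Matrix.conjTranspose_apply, Fin.sum_univ_succ,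
      Complex.ext_iff] <;> ring_nf <;> simp [Complex.I_sq]

lemma cHS_1_2 : (H * S * Y) * Z * (H * S * Y)ᴴ = -X := by
  rw [mul_assoc H S Y]
  refine conjH_of _ _ _ ?_
  rw [← mul_assoc K S Y]
  ext a b
  fin_cases a <;> fin_cases b <;>
    simp [X, Y, Z, K, S, Matrix.mul_apply, Matrix.conjTranspose_apply, Fin.sum_univ_succ,
      Complex.ext_iff] <;> ring_nf <;> simp [Complex.I_sq]

lemma cSH_1_2 : (S * H * Y) * Z * (S * H * Y)ᴴ = -Y := by
  refine conjSH_of _ _ _ ?_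
  ext a b
  fin_cases a <;> fin_cases b <;>
    simp [X, Y, Z, K, S, Matrix.mul_apply, Matrix.conjTranspose_apply, Fin.sum_univ_succ,
      Complex.ext_iff] <;> ring_nf <;> simp [Complex.I_sq]

lemma cP_2_0 : Z * X * Z = -X := by
  ext a b
  fin_cases a <;> fin_cases b <;>
    simp [X, Y, Z, K, S, Matrix.mul_apply, Matrix.conjTranspose_apply, Fin.sum_univ_succ,
      Complex.ext_iff] <;> ring_nf <;> simp [Complex.I_sq]

lemma cHS_2_0 : (H * S * Z) * X * (H * S * Z)ᴴ = Y := by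
  rw [mul_assoc H S Z]
  refine conjH_of _ _ _ ?_
  rw [← mul_assoc K S Z]
  ext a b
  fin_cases a <;> fin_cases b <;>
    simp [X, Y, Z, K, S, Matrix.mul_apply, Matrix.conjTranspose_apply, Fin.sum_univ_succ,
      Complex.ext_iff] <;> ring_nf <;> simp [Complex.I_sq]

lemma cSH_2_0 : (S * H * Z) * X * (S * H * Z)ᴴ = -Z := by
  refine conjSH_of _ _ _ ?_
  ext a b
  fin_cases a <;> fin_cases b <;>
    simp [X, Y, Z, K, S, Matrix.mul_apply, Matrix.conjTranspose_apply, Fin.sum_univ_succ,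
      Complex.ext_iff] <;> ring_nf <;> simp [Complex.I_sq]

lemma cP_2_1 : Z * Y * Z = -Y := by
  ext a b
  fin_cases a <;> fin_cases b <;>
    simp [X, Y, Z, K, S, Matrix.mul_apply, Matrix.conjTranspose_apply, Fin.sum_univ_succ,
      Complex.ext_iff] <;> ring_nf <;> simp [Complex.I_sq]

lemma cHS_2_1 : (H * S * Z) * Y * (H * S * Z)ᴴ = Z := by
  rw [mul_assoc H S Z]
  refine conjH_of _ _ _ ?_
  rw [← mul_assoc K S Z]
  ext a b
  fin_cases a <;> fin_cases b <;>
    simp [X, Y, Z, K, S, Matrix.mul_apply, Matrix.conjTranspose_apply, Fin.sum_univ_succ,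
      Complex.ext_iff] <;> ring_nf <;> simp [Complex.I_sq]

lemma cSH_2_1 : (S * H * Z) * Y * (S * H * Z)ᴴ = -X := by
  refine conjSH_of _ _ _ ?_
  ext a b
  fin_cases a <;> fin_cases b <;>
    simp [X, Y, Z, K, S, Matrix.mul_apply, Matrix.conjTranspose_apply, Fin.sum_univ_succ,
      Complex.ext_iff] <;> ring_nf <;> simp [Complex.I_sq]

lemma cP_2_2 : Z * Z * Z = Z := by
  ext a b
  fin_cases a <;> fin_cases b <;>
    simp [X, Y, Z, K, S, Matrix.mul_apply, Matrix.conjTranspose_apply, Fin.sum_univ_succ,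
      Complex.ext_iff] <;> ring_nf <;> simp [Complex.I_sq]

lemma cHS_2_2 : (H * S * Z) * Z * (H * S * Z)ᴴ = X := by
  rw [mul_assoc H S Z]
  refine conjH_of _ _ _ ?_
  rw [← mul_assoc K S Z]
  ext a b
  fin_cases a <;> fin_cases b <;>
    simp [X, Y, Z, K, S, Matrix.mul_apply, Matrix.conjTranspose_apply, Fin.sum_univ_succ,
      Complex.ext_iff] <;> ring_nf <;> simp [Complex.I_sq]

lemma cSH_2_2 : (S * H * Z) * Z * (S * H * Z)ᴴ = Y := by
  refine conjSH_of _ _ _ ?_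
  ext a b
  fin_cases a <;> fin_cases b <;>
    simp [X, Y, Z, K, S, Matrix.mul_apply, Matrix.conjTranspose_apply, Fin.sum_univ_succ,
      Complex.ext_iff] <;> ring_nf <;> simp [Complex.I_sq]

set_option maxHeartbeats 1600000 in
noncomputable def rr (U : Matrix (Fin 2) (Fin 2) ℂ) : Fin 3 → Fin 3 → ℝ := fun j =>
  ![((U * σ j * Uᴴ) 0 1).re, -((U * σ j * Uᴴ) 0 1).im, ((U * σ j * Uᴴ) 0 0).re]

noncomputable def tt (U : Matrix (Fin 2) (Fin 2) ℂ) : Fin 3 → Fin 3 → ℝ :=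
  ![![rr U 0 0, rr U 1 1, rr U 2 2],
    ![-rr U 0 1, -rr U 1 2, rr U 2 0],
    ![rr U 0 2, rr U 1 0, rr U 2 1]]

noncomputable def aa (U : Matrix (Fin 2) (Fin 2) ℂ) : Fin 3 → Fin 3 → ℝ := fun p i =>
  (tt U p i - (tt U p 0 + tt U p 1 + tt U p 2)) / 2

lemma Xherm : Xᴴ = X := by
  ext a b; fin_cases a <;> fin_cases b <;> simp [X]
lemma Yherm : Yᴴ = Y := by
  ext a b; fin_cases a <;> fin_cases b <;> simp [Y]
lemma Zherm : Zᴴ = Z := by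
  ext a b; fin_cases a <;> fin_cases b <;> simp [Z]

set_option maxHeartbeats 1600000 in
/-- **Single-qubit unitary channels as real linear combinations of Clifford
conjugations** (Appendix C): for every unitary `U`, there are real coefficients
`a` such that on every traceless `A`,
`U A U† = ∑ᵢ a₀ᵢ σᵢAσᵢ + a₁ᵢ (HSσᵢ)A(HSσᵢ)† + a₂ᵢ (SHσᵢ)A(SHσᵢ)†`. -/
theorem unitary_conj_eq_clifford_combination
    (U : Matrix (Fin 2) (Fin 2) ℂ) (hU : Uᴴ * U = 1) :
    ∃ a : Fin 3 → Fin 3 → ℝ,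
      ∀ A : Matrix (Fin 2) (Fin 2) ℂ, Matrix.trace A = 0 →
        U * A * Uᴴ = ∑ i : Fin 3,
          ((a 0 i : ℂ) • (σ i * A * σ i) +
           (a 1 i : ℂ) • ((H * S * σ i) * A * (H * S * σ i)ᴴ) +
           (a 2 i : ℂ) • ((S * H * σ i) * A * (S * H * σ i)ᴴ)) := by
  have hσ0 : σ 0 = X := rfl
  have hσ1 : σ 1 = Y := rfl
  have hσ2 : σ 2 = Z := rfl
  have htr : ∀ W : Matrix (Fin 2) (Fin 2) ℂ, Matrix.trace W = 0 →
      Matrix.trace (U * W * Uᴴ) = 0 := by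
    intro W hW
    rw [Matrix.trace_mul_cycle, hU, one_mul]
    exact hW
  have hherm : ∀ W : Matrix (Fin 2) (Fin 2) ℂ, Wᴴ = W → (U * W * Uᴴ)ᴴ = U * W * Uᴴ := by
    intro W hW
    simp [Matrix.conjTranspose_mul, hW, mul_assoc]
  have keyX : U * X * Uᴴ = ∑ i : Fin 3,
      ((aa U 0 i : ℂ) • (σ i * X * σ i) +
       (aa U 1 i : ℂ) • ((H * S * σ i) * X * (H * S * σ i)ᴴ) +
       (aa U 2 i : ℂ) • ((S * H * σ i) * X * (S * H * σ i)ᴴ)) := by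
    rw [hermit_decomp (U * X * Uᴴ) (htr X (by simp [X, Matrix.trace_fin_two])) (hherm X Xherm),
      Fin.sum_univ_three, hσ0, hσ1, hσ2,
      cP_0_0, cP_1_0, cP_2_0, cHS_0_0, cHS_1_0, cHS_2_0, cSH_0_0, cSH_1_0, cSH_2_0]
    ext a b
    fin_cases a <;> fin_cases b <;>
      simp [X, Y, Z, aa, tt, Complex.ext_iff, rr, hσ0, hσ1, hσ2] <;>
      (try push_cast) <;> (try ring) <;> (try simp)
  have keyY : U * Y * Uᴴ = ∑ i : Fin 3,
      ((aa U 0 i : ℂ) • (σ i * Y * σ i) +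
       (aa U 1 i : ℂ) • ((H * S * σ i) * Y * (H * S * σ i)ᴴ) +
       (aa U 2 i : ℂ) • ((S * H * σ i) * Y * (S * H * σ i)ᴴ)) := by
    rw [hermit_decomp (U * Y * Uᴴ) (htr Y (by simp [Y, Matrix.trace_fin_two])) (hherm Y Yherm),
      Fin.sum_univ_three, hσ0, hσ1, hσ2,
      cP_0_1, cP_1_1, cP_2_1, cHS_0_1, cHS_1_1, cHS_2_1, cSH_0_1, cSH_1_1, cSH_2_1]
    ext a b
    fin_cases a <;> fin_cases b <;>
      simp [X, Y, Z, aa, tt, Complex.ext_iff, rr, hσ0, hσ1, hσ2] <;>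
      (try push_cast) <;> (try ring) <;> (try simp)
  have keyZ : U * Z * Uᴴ = ∑ i : Fin 3,
      ((aa U 0 i : ℂ) • (σ i * Z * σ i) +
       (aa U 1 i : ℂ) • ((H * S * σ i) * Z * (H * S * σ i)ᴴ) +
       (aa U 2 i : ℂ) • ((S * H * σ i) * Z * (S * H * σ i)ᴴ)) := by
    rw [hermit_decomp (U * Z * Uᴴ) (htr Z (by simp [Z, Matrix.trace_fin_two])) (hherm Z Zherm),
      Fin.sum_univ_three, hσ0, hσ1, hσ2,
      cP_0_2, cP_1_2, cP_2_2, cHS_0_2, cHS_1_2, cHS_2_2, cSH_0_2, cSH_1_2, cSH_2_2]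
    ext a b
    fin_cases a <;> fin_cases b <;>
      simp [X, Y, Z, aa, tt, Complex.ext_iff, rr, hσ0, hσ1, hσ2] <;>
      (try push_cast) <;> (try ring) <;> (try simp)
  refine ⟨aa U, ?_⟩
  intro A hA
  rw [traceless_decomp A hA]
  have expand : ∀ M N : Matrix (Fin 2) (Fin 2) ℂ,
      M * (((A 0 1 + A 1 0) / 2) • X + (Complex.I * (A 0 1 - A 1 0) / 2) • Y + (A 0 0) • Z) * N
        = ((A 0 1 + A 1 0) / 2) • (M * X * N) + (Complex.I * (A 0 1 - A 1 0) / 2) • (M * Y * N)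
          + (A 0 0) • (M * Z * N) := by
    intro M N
    simp [Matrix.mul_add, Matrix.add_mul, Matrix.mul_smul, Matrix.smul_mul]
  simp only [expand]
  rw [keyX, keyY, keyZ]
  rw [Finset.smul_sum, Finset.smul_sum, Finset.smul_sum,
    ← Finset.sum_add_distrib, ← Finset.sum_add_distrib]
  refine Finset.sum_congr rfl fun i _ => ?_
  module
end SingleQubitCliffordDecomp
end

section
/- (1/(8·Real.pi)) · ∫ u in (-1:ℝ)..1, ∫ v in (-1:ℝ)..1, ∫ θ in (0:ℝ)..(2·Real.pi), Real.log (Real.sqrt (1 − u^2) · Real.sqrt (1 − v^2) · |Real.cos θ|) = Real.log 2 − 2. Equivalently, for u, v independent uniform on [−1,1] and θ independent uniform on [0, 2π), the expectation of log(√(1−u²)·√(1−v²)·|cos θ|) equals log 2 − 2. (This is the Appendix B Haar average E_{U,V∼Haar}[log|U₃₃V₂₂ + U₃₂V₁₂|] = log 2 − 2: the bilinear combination equals the scalar product of two random planar projections of independent uniform unit vectors, whose norms are √(1−u²), √(1−v²) and whose relative angle θ is uniform; this value enters the upper bound Δ ≤ 3γ + 3 for staggered-like doping.) -/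
/-!
Off a null set the integrand splits as `log √(1-u²) + log √(1-v²) + log |cos θ|`, so the
triple average is a sum of three one-dimensional averages. Since `1 - x² = (1+x)(1-x)`, the
average of `log √(1-x²)` over `[-1,1]` is `½ ∫₀² log = log 2 - 1`; by `π`-periodicity and
Euler's `∫₀^π log sin = -π log 2`, the average of `log |cos|` over a period is `-log 2`.
Hence the total is `2 (log 2 - 1) - log 2 = log 2 - 2`.
-/
open Real intervalIntegral Set Filter
open MeasureTheory (volume)

theorem intervalIntegral.integral_integral_integral_add {a b c d e f : ℝ} {F G H : ℝ → ℝ}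
    (hF : IntervalIntegrable F volume a b) (hG : IntervalIntegrable G volume c d)
    (hH : IntervalIntegrable H volume e f) :
    ∫ x in a..b, ∫ y in c..d, ∫ z in e..f, (F x + G y + H z) =
      (d - c) * (f - e) * (∫ x in a..b, F x) + (b - a) * (f - e) * (∫ y in c..d, G y) +
        (b - a) * (d - c) * ∫ z in e..f, H z := by
  have inner (x y : ℝ) : ∫ z in e..f, (F x + G y + H z) =
      (f - e) * F x + ((f - e) * G y + ∫ z in e..f, H z) := by
    rw [integral_add intervalIntegrable_const hH, integral_const, smul_eq_mul]; ring
  have middle (x : ℝ) : ∫ y in c..d, ((f - e) * F x + ((f - e) * G y + ∫ z in e..f, H z)) =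
      (d - c) * (f - e) * F x + ((f - e) * ∫ y in c..d, G y) + (d - c) * ∫ z in e..f, H z := by
    rw [integral_add intervalIntegrable_const ((hG.const_mul _).add intervalIntegrable_const),
      integral_add (hG.const_mul _) intervalIntegrable_const, integral_const_mul (f - e) G,
      integral_const, integral_const, smul_eq_mul, smul_eq_mul]; ring
  simp only [inner, middle]
  rw [integral_add ((hF.const_mul _).add intervalIntegrable_const) intervalIntegrable_const,
    integral_add (hF.const_mul _) intervalIntegrable_const, integral_const_mul _ F,
    integral_const, integral_const, smul_eq_mul, smul_eq_mul]; ring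

theorem intervalIntegrable_log_one_add :
    IntervalIntegrable (fun x => log (1 + x)) volume (-1) 1 := by
  have := (intervalIntegrable_log' (a := 0) (b := 2)).comp_add_left 1
  norm_num at this
  exact this

theorem intervalIntegrable_log_one_sub :
    IntervalIntegrable (fun x => log (1 - x)) volume (-1) 1 := by
  have := (intervalIntegrable_log' (a := 2) (b := 0)).comp_sub_left 1
  norm_num at this
  exact this

theorem integral_log_one_add : ∫ x in (-1 : ℝ)..1, log (1 + x) = 2 * log 2 - 2 := by
  rw [integral_comp_add_left (fun x => log x) 1]
  norm_num [integral_log]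

theorem integral_log_one_sub : ∫ x in (-1 : ℝ)..1, log (1 - x) = 2 * log 2 - 2 := by
  rw [integral_comp_sub_left (fun x => log x) 1]
  norm_num [integral_log]

theorem log_sqrt_one_sub_sq_eqOn :
    EqOn (fun x : ℝ => log √(1 - x ^ 2)) (fun x => (log (1 + x) + log (1 - x)) / 2)
      (Ioo (-1) 1) := by
  intro x ⟨hx₁, hx₂⟩
  have factor : 1 - x ^ 2 = (1 + x) * (1 - x) := by ring
  simp only
  rw [log_sqrt (by nlinarith), factor, log_mul (by linarith) (by linarith)]

theorem intervalIntegrable_log_sqrt_one_sub_sq :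
    IntervalIntegrable (fun x : ℝ => log √(1 - x ^ 2)) volume (-1) 1 := by
  rw [intervalIntegrable_congr_uIoo (by simpa using log_sqrt_one_sub_sq_eqOn)]
  exact (intervalIntegrable_log_one_add.add intervalIntegrable_log_one_sub).div_const 2

theorem integral_log_sqrt_one_sub_sq :
    ∫ x in (-1 : ℝ)..1, log √(1 - x ^ 2) = 2 * log 2 - 2 := by
  rw [integral_congr_Ioo_of_le (by norm_num) log_sqrt_one_sub_sq_eqOn,
    intervalIntegral.integral_div,
    integral_add intervalIntegrable_log_one_add intervalIntegrable_log_one_sub,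
    integral_log_one_add, integral_log_one_sub]
  ring

theorem intervalIntegrable_log_abs_cos {a b : ℝ} :
    IntervalIntegrable (fun x => log |cos x|) volume a b := by
  simp only [log_abs]
  exact intervalIntegrable_log_cos

theorem integral_log_abs_cos_zero_two_pi :
    ∫ x in (0 : ℝ)..2 * π, log |cos x| = -2 * π * log 2 := by
  have periodic : Function.Periodic (fun x => log (sin x)) π := fun x => by
    simp only [sin_add_pi, log_neg_eq_log]
  calc ∫ x in (0 : ℝ)..2 * π, log |cos x|
      = ∫ x in (0 : ℝ)..2 * π, log (sin (x + π / 2)) := by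
        simp only [log_abs, sin_add_pi_div_two]
    _ = ∫ x in π / 2..π / 2 + (2 : ℤ) • π, log (sin x) := by
        rw [integral_comp_add_right (fun x => log (sin x)), zero_add]
        congr 1
        simp only [Int.cast_ofNat, zsmul_eq_mul]
        ring
    _ = 2 * ∫ x in (0 : ℝ)..0 + π, log (sin x) := by
        rw [periodic.intervalIntegral_add_zsmul_eq 2 _ (fun _ _ => intervalIntegrable_log_sin),
          periodic.intervalIntegral_add_eq _ 0]; norm_num
    _ = -2 * π * log 2 := by rw [zero_add, integral_log_sin_zero_pi]; ring

theorem sqrt_one_sub_sq_ne_zero {x : ℝ} (hx : x ∈ Ioo (-1) 1) : √(1 - x ^ 2) ≠ 0 :=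
  (sqrt_pos.2 (by nlinarith [hx.1, hx.2])).ne'

theorem cos_ne_zero_mem_codiscreteWithin {s : Set ℝ} : {x | cos x ≠ 0} ∈ codiscreteWithin s :=
  codiscreteWithin_mono (subset_univ s)
    (analyticOnNhd_cos.preimage_zero_mem_codiscrete (x := 0) (by simp))

/-- **Appendix B Haar average** `E[log|U₃₃V₂₂ + U₃₂V₁₂|] = log 2 − 2`:
for `u, v` independent uniform on `[-1,1]` and `θ` independent uniform on
`[0, 2π)`, the expectation of `log(√(1-u²)·√(1-v²)·|cos θ|)` equals `log 2 - 2`. -/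
theorem haar_average_log_bilinear :
    (1 / (8 * Real.pi)) *
      ∫ u in (-1 : ℝ)..1, ∫ v in (-1 : ℝ)..1, ∫ θ in (0 : ℝ)..(2 * Real.pi),
        Real.log (Real.sqrt (1 - u ^ 2) * Real.sqrt (1 - v ^ 2) * |Real.cos θ|) =
      Real.log 2 - 2 := by
  have split : ∫ u in (-1 : ℝ)..1, ∫ v in (-1 : ℝ)..1, ∫ θ in (0 : ℝ)..(2 * π),
        log (√(1 - u ^ 2) * √(1 - v ^ 2) * |cos θ|) =
      ∫ u in (-1 : ℝ)..1, ∫ v in (-1 : ℝ)..1, ∫ θ in (0 : ℝ)..(2 * π),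
        (log √(1 - u ^ 2) + log √(1 - v ^ 2) + log |cos θ|) := by
    refine integral_congr_Ioo_of_le (by norm_num) fun u hu ↦
      integral_congr_Ioo_of_le (by norm_num) fun v hv ↦ integral_congr_codiscreteWithin ?_
    filter_upwards [cos_ne_zero_mem_codiscreteWithin] with θ hθ
    have hu' := sqrt_one_sub_sq_ne_zero hu
    have hv' := sqrt_one_sub_sq_ne_zero hv
    rw [log_mul (mul_ne_zero hu' hv') (abs_ne_zero.2 hθ), log_mul hu' hv']
  rw [split, integral_integral_integral_add intervalIntegrable_log_sqrt_one_sub_sq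
    intervalIntegrable_log_sqrt_one_sub_sq intervalIntegrable_log_abs_cos,
    integral_log_sqrt_one_sub_sq, integral_log_abs_cos_zero_two_pi]
  field_simp
  ring
end
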